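/- arXiv:1311.2851 — 5 statements merged into one kernel-verified Lean document; each statement's English description precedes it below -/
import Mathlib

section
/- If X₁, …, Xₙ are i.i.d. nonnegative random variables whose common distribution is heavy-everywhere (survival function supermultiplicative), then E[min(X₁,…,Xₙ)] ≤ E[X₁]/n. -/
open MeasureTheory ProbabilityTheory
open scoped ENNReal

/-!
Write `S t = P(X₁ > t)` and `m = min Xᵢ`. By independence `P(m > t) = S t ^ n`, and iterating
supermultiplicativity gives `S t ^ n ≤ S (n t)`. Hence `P(n m > t) = S (t / n) ^ n ≤ S t` for all
`t > 0`, i.e. `X₁` stochastically dominates `n m`, and the tail formula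
`E Y = ∫₀^∞ P(Y > t) dt` turns this into `n E m ≤ E X₁`.
-/

theorem lt_ciInf_iff_of_finite {ι α : Type*} [Finite ι] [Nonempty ι]
    [ConditionallyCompleteLinearOrder α] {f : ι → α} {a : α} :
    a < ⨅ i, f i ↔ ∀ i, a < f i := by
  obtain ⟨j, hj⟩ := exists_eq_ciInf_of_finite (f := f)
  exact ⟨fun h i => h.trans_le (ciInf_le (Set.finite_range f).bddBelow i),
    fun h => hj ▸ h j⟩

theorem pow_le_apply_natCast_mul_of_supermul {M : Type*} [CommMonoid M] [PartialOrder M]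
    [MulRightMono M] {S : ℝ → M} (hS : ∀ a b, 0 ≤ a → 0 ≤ b → S a * S b ≤ S (a + b))
    {t : ℝ} (ht : 0 ≤ t) {k : ℕ} (hk : 1 ≤ k) : S t ^ k ≤ S (k * t) := by
  induction k, hk using Nat.le_induction with
  | base => simp
  | succ k _ ih =>
    calc S t ^ (k + 1) = S t ^ k * S t := pow_succ _ _
      _ ≤ S (k * t) * S t := mul_le_mul_left ih _
      _ ≤ S (k * t + t) := hS _ _ (by positivity) ht
      _ = S ((k + 1 : ℕ) * t) := by push_cast; ring_nf

theorem ProbabilityTheory.iIndepFun.measure_lt_iInf {Ω ι : Type*} [MeasurableSpace Ω]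
    {μ : Measure Ω} [Fintype ι] [Nonempty ι] {X : ι → Ω → ℝ}
    (hX : iIndepFun X μ) (t : ℝ) :
    μ {ω | t < ⨅ i, X i ω} = ∏ i, μ {ω | t < X i ω} := by
  have hset : {ω | t < ⨅ i, X i ω} = ⋂ i, X i ⁻¹' Set.Ioi t := by
    ext ω; simp [lt_ciInf_iff_of_finite]
  rw [hset, hX.meas_iInter fun i => ⟨Set.Ioi t, measurableSet_Ioi, rfl⟩]
  rfl

theorem lintegral_ofReal_le_of_measure_lt_le {α β : Type*} [MeasurableSpace α]
    [MeasurableSpace β] {μ : Measure α} {ν : Measure β} {f : α → ℝ} {g : β → ℝ}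
    (hf : 0 ≤ᵐ[μ] f) (hfm : AEMeasurable f μ) (hg : 0 ≤ᵐ[ν] g) (hgm : AEMeasurable g ν)
    (h : ∀ t > 0, μ {a | t < f a} ≤ ν {b | t < g b}) :
    ∫⁻ a, ENNReal.ofReal (f a) ∂μ ≤ ∫⁻ b, ENNReal.ofReal (g b) ∂ν := by
  rw [lintegral_eq_lintegral_meas_lt μ hf hfm, lintegral_eq_lintegral_meas_lt ν hg hgm]
  exact setLIntegral_mono' measurableSet_Ioi h

theorem integral_le_integral_of_measure_lt_le {α β : Type*} [MeasurableSpace α]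
    [MeasurableSpace β] {μ : Measure α} {ν : Measure β} {f : α → ℝ} {g : β → ℝ}
    (hf : 0 ≤ᵐ[μ] f) (hfm : AEMeasurable f μ) (hg : 0 ≤ᵐ[ν] g) (hgi : Integrable g ν)
    (h : ∀ t > 0, μ {a | t < f a} ≤ ν {b | t < g b}) :
    ∫ a, f a ∂μ ≤ ∫ b, g b ∂ν := by
  rw [integral_eq_lintegral_of_nonneg_ae hf hfm.aestronglyMeasurable,
    integral_eq_lintegral_of_nonneg_ae hg hgi.aestronglyMeasurable]
  exact ENNReal.toReal_mono (hgi.lintegral_lt_top).ne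
    (lintegral_ofReal_le_of_measure_lt_le hf hfm hg hgi.aemeasurable h)

/-- If `X₁,…,Xₙ` are i.i.d. nonnegative random variables with heavy-everywhere
(supermultiplicative survival) common distribution, then
`E[min(X₁,…,Xₙ)] ≤ E[X₁]/n`. -/
theorem stmt_1 {Ω : Type*} [MeasurableSpace Ω] (μ : Measure Ω) [IsProbabilityMeasure μ]
    (n : ℕ) (hn : 0 < n) (X : Fin n → Ω → ℝ)
    (hmeas : ∀ i, Measurable (X i))
    (hindep : ProbabilityTheory.iIndepFun X μ)
    (hident : ∀ i, Measure.map (X i) μ = Measure.map (X ⟨0, hn⟩) μ)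
    (hnonneg : ∀ i ω, 0 ≤ X i ω)
    (hint : ∀ i, Integrable (X i) μ)
    (hheavy : ∀ a b : ℝ, 0 ≤ a → 0 ≤ b →
      (μ {ω | a + b < X ⟨0, hn⟩ ω}).toReal ≥
        (μ {ω | a < X ⟨0, hn⟩ ω}).toReal * (μ {ω | b < X ⟨0, hn⟩ ω}).toReal) :
    ∫ ω, (⨅ i, X i ω) ∂μ ≤ (∫ ω, X ⟨0, hn⟩ ω ∂μ) / n := by
  have : Nonempty (Fin n) := ⟨⟨0, hn⟩⟩
  set X₀ := X ⟨0, hn⟩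
  set S : ℝ → ℝ≥0∞ := fun t => μ {ω | t < X₀ ω}
  have hsupermul : ∀ a b, 0 ≤ a → 0 ≤ b → S a * S b ≤ S (a + b) := fun a b ha hb =>
    (ENNReal.toReal_le_toReal (by finiteness) (by finiteness)).mp
      (by simpa [ENNReal.toReal_mul] using hheavy a b ha hb)
  have hsurv (i : Fin n) (t : ℝ) : μ {ω | t < X i ω} = S t := by
    have := congrArg (· (Set.Ioi t)) (hident i)
    rwa [Measure.map_apply (hmeas _) measurableSet_Ioi,
      Measure.map_apply (hmeas _) measurableSet_Ioi] at this
  have hdom : ∀ t > 0, μ {ω | t < n * ⨅ i, X i ω} ≤ S t := by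
    intro t ht
    have hset : {ω | t < n * ⨅ i, X i ω} = {ω | t / n < ⨅ i, X i ω} := by
      ext; simp [div_lt_iff₀', hn]
    rw [hset, hindep.measure_lt_iInf]
    simpa [hsurv, mul_div_cancel₀, hn.ne'] using
      pow_le_apply_natCast_mul_of_supermul hsupermul (t := t / n) (by positivity) hn
  have hmean := integral_le_integral_of_measure_lt_le
    (Filter.Eventually.of_forall fun ω => mul_nonneg n.cast_nonneg (le_ciInf (hnonneg · ω)))
    (measurable_const.mul (Measurable.iInf hmeas)).aemeasurable
    (Filter.Eventually.of_forall (hnonneg _)) (hint _) hdom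
  rw [integral_const_mul] at hmean
  rwa [le_div_iff₀' (by exact_mod_cast hn)]
end

section
/- Let S₁, …, S_L : [0,∞) → [0,1] be survival functions each satisfying Sᵢ(a+b) ≥ Sᵢ(a)·Sᵢ(b) for all a, b ≥ 0, and suppose they are pointwise comparable in the sense that for all i, j and all a, b ≥ 0, if Sᵢ(a) > Sⱼ(a) then Sᵢ(b) ≥ Sⱼ(b). Then for any nonnegative weights p₁,…,p_L summing to 1, the mixture S = Σᵢ pᵢ Sᵢ also satisfies S(a+b) ≥ S(a)·S(b) for all a, b ≥ 0. -/
/-!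
The comparability hypothesis says exactly that the vectors `(Sᵢ(a))ᵢ` and `(Sᵢ(b))ᵢ` are similarly
ordered, so Chebyshev's sum inequality with weights `pᵢ` gives
`(Σ pᵢ Sᵢ(a)) (Σ pᵢ Sᵢ(b)) ≤ Σ pᵢ Sᵢ(a) Sᵢ(b)`, and the right-hand side is at most
`Σ pᵢ Sᵢ(a + b)` by supermultiplicativity of each component.
-/

open Finset

lemma sum_sum_mul_mul_sub_mul_sub {ι α : Type*} [Fintype ι] [CommRing α] (w f g : ι → α) :
    ∑ i, ∑ j, w i * w j * ((f i - f j) * (g i - g j)) =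
      2 * ((∑ i, w i) * ∑ i, w i * (f i * g i) - (∑ i, w i * f i) * ∑ i, w i * g i) := by
  have hterm : ∀ i j, w i * w j * ((f i - f j) * (g i - g j)) =
      w i * (f i * g i) * w j - w i * f i * (w j * g j) - w i * g i * (w j * f j) +
        w i * (w j * (f j * g j)) := fun i j ↦ by ring
  simp only [hterm, sum_add_distrib, sum_sub_distrib, ← sum_mul, ← mul_sum]
  ring

theorem Monovary.sum_mul_mul_sum_mul_le_sum_mul_sum_mul {ι α : Type*} [Fintype ι] [CommRing α]
    [LinearOrder α] [IsStrictOrderedRing α] {w f g : ι → α} (hfg : Monovary f g)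
    (hw : ∀ i, 0 ≤ w i) :
    (∑ i, w i * f i) * ∑ i, w i * g i ≤ (∑ i, w i) * ∑ i, w i * (f i * g i) := by
  have hnonneg : 0 ≤ ∑ i, ∑ j, w i * w j * ((f i - f j) * (g i - g j)) :=
    sum_nonneg fun i _ ↦ sum_nonneg fun j _ ↦
      mul_nonneg (mul_nonneg (hw i) (hw j)) (hfg.sub_mul_sub_nonneg j i)
  rw [sum_sum_mul_mul_sub_mul_sub] at hnonneg
  linarith

theorem stmt_4_general (L : ℕ) (S : Fin L → ℝ → ℝ) (p : Fin L → ℝ)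
    (hsuper : ∀ i, ∀ a b : ℝ, 0 ≤ a → 0 ≤ b → S i (a + b) ≥ S i a * S i b)
    (hcomp : ∀ i j, ∀ a b : ℝ, 0 ≤ a → 0 ≤ b → S i a > S j a → S i b ≥ S j b)
    (hp : ∀ i, 0 ≤ p i) (hsum : ∑ i, p i = 1) :
    ∀ a b : ℝ, 0 ≤ a → 0 ≤ b →
      (∑ i, p i * S i (a + b)) ≥ (∑ i, p i * S i a) * (∑ i, p i * S i b) := by
  intro a b ha hb
  have hmono : Monovary (S · a) (S · b) := fun i j hlt ↦ hcomp j i b a hb ha hlt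
  calc (∑ i, p i * S i a) * ∑ i, p i * S i b
      ≤ (∑ i, p i) * ∑ i, p i * (S i a * S i b) :=
        hmono.sum_mul_mul_sum_mul_le_sum_mul_sum_mul hp
    _ = ∑ i, p i * (S i a * S i b) := by rw [hsum, one_mul]
    _ ≤ ∑ i, p i * S i (a + b) :=
        sum_le_sum fun i _ ↦ mul_le_mul_of_nonneg_left (hsuper i a b ha hb) (hp i)

/-- A pairwise-comparable mixture of heavy-everywhere (supermultiplicative)
survival functions is heavy-everywhere. -/
theorem stmt_4 (L : ℕ) (S : Fin L → ℝ → ℝ) (p : Fin L → ℝ)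
    (hrange : ∀ i x, 0 ≤ x → S i x ∈ Set.Icc (0 : ℝ) 1)
    (hsuper : ∀ i, ∀ a b : ℝ, 0 ≤ a → 0 ≤ b → S i (a + b) ≥ S i a * S i b)
    (hcomp : ∀ i j, ∀ a b : ℝ, 0 ≤ a → 0 ≤ b → S i a > S j a → S i b ≥ S j b)
    (hp : ∀ i, 0 ≤ p i) (hsum : ∑ i, p i = 1) :
    ∀ a b : ℝ, 0 ≤ a → 0 ≤ b →
      (∑ i, p i * S i (a + b)) ≥ (∑ i, p i * S i a) * (∑ i, p i * S i b) :=
  stmt_4_general L S p hsuper hcomp hp hsum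
end

section
/- For any nonnegative weights p₁,…,p_L summing to 1, and rates μ₁,…,μ_L > 0, the function S(x) = Σᵢ pᵢ e^{−μᵢ x} satisfies S(a+b) ≥ S(a)·S(b) for all a, b ≥ 0 (i.e., a finite mixture of exponential distributions is heavy-everywhere). -/
/-! For `a, b ≥ 0` the families `exp (-μᵢ a)` and `exp (-μᵢ b)` are both antitone in `μᵢ`, hence
similarly ordered, so Chebyshev's sum inequality for the probability weights `pᵢ` gives
`S a * S b ≤ ∑ pᵢ exp (-μᵢ a) exp (-μᵢ b) = S (a + b)`. -/

open Real Finset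

theorem MonovaryOn.sum_mul_sum_le_sum_mul_sum_of_nonneg {ι : Type*} {s : Finset ι}
    {p f g : ι → ℝ} (hfg : MonovaryOn f g s) (hp : ∀ i ∈ s, 0 ≤ p i) :
    (∑ i ∈ s, p i * f i) * (∑ i ∈ s, p i * g i) ≤
      (∑ i ∈ s, p i) * ∑ i ∈ s, p i * (f i * g i) := by
  have hpairs : 0 ≤ ∑ i ∈ s, ∑ j ∈ s, p i * p j * ((f i - f j) * (g i - g j)) :=
    sum_nonneg fun i hi => sum_nonneg fun j hj =>
      mul_nonneg (mul_nonneg (hp i hi) (hp j hj)) (hfg.sub_mul_sub_nonneg hj hi)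
  have hexpand : ∑ i ∈ s, ∑ j ∈ s, p i * p j * ((f i - f j) * (g i - g j)) =
      2 * ((∑ i ∈ s, p i) * ∑ i ∈ s, p i * (f i * g i)) -
        2 * ((∑ i ∈ s, p i * f i) * ∑ i ∈ s, p i * g i) := by
    have hterm : ∀ i j, p i * p j * ((f i - f j) * (g i - g j)) =
        p i * (p j * (f j * g j)) + p j * (p i * (f i * g i)) -
          p i * f i * (p j * g j) - p j * f j * (p i * g i) := fun i j => by ring
    simp_rw [hterm, sum_sub_distrib, sum_add_distrib]
    rw [sum_comm (f := fun i j => p j * (p i * (f i * g i))),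
      sum_comm (f := fun i j => p j * f j * (p i * g i)), ← sum_mul_sum, ← sum_mul_sum]
    ring
  linarith

theorem exp_neg_mul_monovary {a b : ℝ} (ha : 0 ≤ a) (hb : 0 ≤ b) :
    Monovary (fun m : ℝ => exp (-m * a)) (fun m => exp (-m * b)) :=
  Antitone.monovary (fun _ _ h => exp_le_exp.2 (by nlinarith))
    (fun _ _ h => exp_le_exp.2 (by nlinarith))

theorem stmt_5_general (L : ℕ) (p : Fin L → ℝ) (μ : Fin L → ℝ)
    (hp : ∀ i, 0 ≤ p i) (hsum : ∑ i, p i = 1) :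
    ∀ a b : ℝ, 0 ≤ a → 0 ≤ b →
      (∑ i, p i * Real.exp (-(μ i) * (a + b))) ≥
        (∑ i, p i * Real.exp (-(μ i) * a)) * (∑ i, p i * Real.exp (-(μ i) * b)) := by
  intro a b ha hb
  have hcheb := ((exp_neg_mul_monovary ha hb).comp_right μ).monovaryOn (univ : Finset (Fin L))
    |>.sum_mul_sum_le_sum_mul_sum_of_nonneg (p := p) fun i _ => hp i
  simpa only [Function.comp_apply, hsum, one_mul, ← exp_add, ← mul_add] using hcheb

/-- A finite mixture of exponential distributions is heavy-everywhere:
its survival function is supermultiplicative. -/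
theorem stmt_5 (L : ℕ) (p : Fin L → ℝ) (μ : Fin L → ℝ)
    (hp : ∀ i, 0 ≤ p i) (hsum : ∑ i, p i = 1) (hμ : ∀ i, 0 < μ i) :
    ∀ a b : ℝ, 0 ≤ a → 0 ≤ b →
      (∑ i, p i * Real.exp (-(μ i) * (a + b))) ≥
        (∑ i, p i * Real.exp (-(μ i) * a)) * (∑ i, p i * Real.exp (-(μ i) * b)) :=
  stmt_5_general L p μ hp hsum
end

section
/- If X₁ and X₂ are independent nonnegative random variables each with a light-everywhere distribution, then X₁ + X₂ has a light-everywhere distribution; i.e., if P(Xᵢ > a+b) ≤ P(Xᵢ > a)·P(Xᵢ > b) for i = 1,2 and all a, b ≥ 0, then P(X₁+X₂ > a+b) ≤ P(X₁+X₂ > a)·P(X₁+X₂ > b) for all a, b ≥ 0. -/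
/-!
Split the event `{X₁ + X₂ > a + b}` according to whether `X₂ ≤ b`. On `{X₂ ≤ b}`, conditioning on
`X₂ = y` and applying submultiplicativity of the tail of `X₁` at `(a, b - y)` bounds its probability
by `P(X₁ > a) · P(X₁ + X₂ > b, X₂ ≤ b)`. On `{X₂ > b}`, conditioning on `X₁ = x` and applying
submultiplicativity of the tail of `X₂` at `(max (a - x) 0, b)` bounds it by
`P(X₁ + X₂ > a) · P(X₂ > b)`. Since both summands are nonnegative, `P(X₁ > a) ≤ P(X₁ + X₂ > a)` and
`P(X₂ > b) ≤ P(X₁ + X₂ > b, X₂ > b)`, and the two bounds add up to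
`P(X₁ + X₂ > a) · P(X₁ + X₂ > b)`.
-/

open MeasureTheory Measure ProbabilityTheory Set

def IsLightEverywhere (ν : Measure ℝ) : Prop :=
  ∀ a b : ℝ, 0 ≤ a → 0 ≤ b → ν (Ioi (a + b)) ≤ ν (Ioi a) * ν (Ioi b)

lemma measurable_measure_Ioi_sub (ν : Measure ℝ) (c : ℝ) :
    Measurable fun x ↦ ν (Ioi (c - x)) :=
  Monotone.measurable fun _ _ hxy ↦ measure_mono <| Ioi_subset_Ioi <| sub_le_sub_left hxy c

lemma conv_apply_Ioi (μ ν : Measure ℝ) [SFinite ν] (c : ℝ) :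
    (μ ∗ ν) (Ioi c) = ∫⁻ x, ν (Ioi (c - x)) ∂μ := by
  rw [conv, map_apply measurable_add measurableSet_Ioi,
    prod_apply (measurable_add measurableSet_Ioi)]
  congr! with x
  ext y
  simp [sub_lt_iff_lt_add']

lemma measure_Ioi_le_conv_apply_Ioi (μ ν : Measure ℝ) [SFinite μ] [IsProbabilityMeasure ν]
    (hν : ∀ᵐ y ∂ν, 0 ≤ y) (c : ℝ) : μ (Ioi c) ≤ (μ ∗ ν) (Ioi c) := by
  rw [conv_comm, conv_apply_Ioi]
  calc μ (Ioi c) = ∫⁻ _, μ (Ioi c) ∂ν := by simp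
    _ ≤ ∫⁻ y, μ (Ioi (c - y)) ∂ν :=
      lintegral_mono_ae <| hν.mono fun y hy ↦ measure_mono <| Ioi_subset_Ioi (by linarith)

namespace IsLightEverywhere

variable {ν : Measure ℝ}

lemma measure_Ioi_inter_Ioi_le (h : IsLightEverywhere ν) {b : ℝ} (hb : 0 ≤ b) (c : ℝ) :
    ν (Ioi c ∩ Ioi b) ≤ ν (Ioi (c - b)) * ν (Ioi b) := by
  have hcb : Ioi c ∩ Ioi b = Ioi (max (c - b) 0 + b) := by
    rw [Ioi_inter_Ioi, ← max_add_add_right, sub_add_cancel, zero_add]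
  calc ν (Ioi c ∩ Ioi b) ≤ ν (Ioi (max (c - b) 0)) * ν (Ioi b) :=
        hcb ▸ h _ _ (le_max_right _ _) hb
    _ ≤ ν (Ioi (c - b)) * ν (Ioi b) := by gcongr; exact le_max_left _ _

lemma conv_restrict_Iic_apply_Ioi_add_le (h : IsLightEverywhere ν) [SFinite ν] (ρ : Measure ℝ)
    [SFinite ρ] {a : ℝ} (ha : 0 ≤ a) (b : ℝ) :
    (ν ∗ ρ.restrict (Iic b)) (Ioi (a + b)) ≤ ν (Ioi a) * (ν ∗ ρ.restrict (Iic b)) (Ioi b) := by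
  rw [conv_comm, conv_apply_Ioi, conv_apply_Ioi,
    ← lintegral_const_mul _ (measurable_measure_Ioi_sub ν b)]
  refine setLIntegral_mono' measurableSet_Iic fun y (hy : y ≤ b) ↦ ?_
  rw [add_sub_assoc]
  exact h a (b - y) ha (sub_nonneg.2 hy)

lemma conv_restrict_Ioi_apply_Ioi_add_le (h : IsLightEverywhere ν) [SFinite ν] (μ : Measure ℝ)
    (a : ℝ) {b : ℝ} (hb : 0 ≤ b) :
    (μ ∗ ν.restrict (Ioi b)) (Ioi (a + b)) ≤ (μ ∗ ν) (Ioi a) * ν (Ioi b) := by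
  rw [conv_apply_Ioi, conv_apply_Ioi, ← lintegral_mul_const _ (measurable_measure_Ioi_sub ν a)]
  refine lintegral_mono fun x ↦ ?_
  rw [Measure.restrict_apply measurableSet_Ioi]
  calc ν (Ioi (a + b - x) ∩ Ioi b) ≤ ν (Ioi (a + b - x - b)) * ν (Ioi b) :=
        h.measure_Ioi_inter_Ioi_le hb _
    _ = ν (Ioi (a - x)) * ν (Ioi b) := by ring_nf

theorem conv {ν₁ ν₂ : Measure ℝ} [IsProbabilityMeasure ν₁]
    [IsProbabilityMeasure ν₂] (h₁ : IsLightEverywhere ν₁) (h₂ : IsLightEverywhere ν₂)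
    (hν₁ : ∀ᵐ x ∂ν₁, 0 ≤ x) (hν₂ : ∀ᵐ y ∂ν₂, 0 ≤ y) : IsLightEverywhere (ν₁ ∗ ν₂) := by
  intro a b ha hb
  have hsplit (c : ℝ) : (ν₁ ∗ ν₂) (Ioi c) =
      (ν₁ ∗ ν₂.restrict (Iic b)) (Ioi c) + (ν₁ ∗ ν₂.restrict (Ioi b)) (Ioi c) := by
    rw [← add_apply, ← conv_add, ← compl_Iic (a := b),
      restrict_add_restrict_compl measurableSet_Iic]
  have hIoi : ν₂ (Ioi b) ≤ (ν₁ ∗ ν₂.restrict (Ioi b)) (Ioi b) := by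
    simpa [conv_comm ν₁, Measure.restrict_apply measurableSet_Ioi] using
      measure_Ioi_le_conv_apply_Ioi (ν₂.restrict (Ioi b)) ν₁ hν₁ b
  calc (ν₁ ∗ ν₂) (Ioi (a + b))
      = (ν₁ ∗ ν₂.restrict (Iic b)) (Ioi (a + b)) + (ν₁ ∗ ν₂.restrict (Ioi b)) (Ioi (a + b)) :=
        hsplit _
    _ ≤ ν₁ (Ioi a) * (ν₁ ∗ ν₂.restrict (Iic b)) (Ioi b) + (ν₁ ∗ ν₂) (Ioi a) * ν₂ (Ioi b) :=
        add_le_add (h₁.conv_restrict_Iic_apply_Ioi_add_le _ ha b)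
          (h₂.conv_restrict_Ioi_apply_Ioi_add_le _ a hb)
    _ ≤ (ν₁ ∗ ν₂) (Ioi a) * (ν₁ ∗ ν₂.restrict (Iic b)) (Ioi b) +
          (ν₁ ∗ ν₂) (Ioi a) * (ν₁ ∗ ν₂.restrict (Ioi b)) (Ioi b) := by
        gcongr ?_ * _ + _ * ?_
        exact measure_Ioi_le_conv_apply_Ioi ν₁ ν₂ hν₂ a
    _ = (ν₁ ∗ ν₂) (Ioi a) * (ν₁ ∗ ν₂) (Ioi b) := by rw [← mul_add, hsplit b]

end IsLightEverywhere

lemma isLightEverywhere_map_of_toReal {Ω : Type*} [MeasurableSpace Ω] {μ : Measure Ω}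
    [IsFiniteMeasure μ] {X : Ω → ℝ} (hX : Measurable X)
    (h : ∀ a b : ℝ, 0 ≤ a → 0 ≤ b →
      (μ {ω | a + b < X ω}).toReal ≤ (μ {ω | a < X ω}).toReal * (μ {ω | b < X ω}).toReal) :
    IsLightEverywhere (μ.map X) := by
  intro a b ha hb
  simp only [map_apply hX measurableSet_Ioi]
  rw [← ENNReal.toReal_le_toReal (by finiteness) (by finiteness), ENNReal.toReal_mul]
  exact h a b ha hb

/-- The sum of two independent nonnegative light-everywhere random variables
is light-everywhere (submultiplicative survival function). -/
theorem stmt_8 {Ω : Type*} [MeasurableSpace Ω] (μ : Measure Ω) [IsProbabilityMeasure μ]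
    (X₁ X₂ : Ω → ℝ) (hm1 : Measurable X₁) (hm2 : Measurable X₂)
    (hindep : ProbabilityTheory.IndepFun X₁ X₂ μ)
    (hnn1 : ∀ ω, 0 ≤ X₁ ω) (hnn2 : ∀ ω, 0 ≤ X₂ ω)
    (hlight1 : ∀ a b : ℝ, 0 ≤ a → 0 ≤ b →
      (μ {ω | a + b < X₁ ω}).toReal ≤ (μ {ω | a < X₁ ω}).toReal * (μ {ω | b < X₁ ω}).toReal)
    (hlight2 : ∀ a b : ℝ, 0 ≤ a → 0 ≤ b →
      (μ {ω | a + b < X₂ ω}).toReal ≤ (μ {ω | a < X₂ ω}).toReal * (μ {ω | b < X₂ ω}).toReal) :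
    ∀ a b : ℝ, 0 ≤ a → 0 ≤ b →
      (μ {ω | a + b < X₁ ω + X₂ ω}).toReal ≤
        (μ {ω | a < X₁ ω + X₂ ω}).toReal * (μ {ω | b < X₁ ω + X₂ ω}).toReal := by
  intro a b ha hb
  have := isProbabilityMeasure_map (μ := μ) hm1.aemeasurable
  have := isProbabilityMeasure_map (μ := μ) hm2.aemeasurable
  have ae_nonneg {X : Ω → ℝ} (hX : Measurable X) (hX₀ : ∀ ω, 0 ≤ X ω) : ∀ᵐ x ∂μ.map X, 0 ≤ x :=
    (ae_map_iff hX.aemeasurable measurableSet_Ici).2 (ae_of_all _ hX₀)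
  have key := (isLightEverywhere_map_of_toReal hm1 hlight1).conv
    (isLightEverywhere_map_of_toReal hm2 hlight2) (ae_nonneg hm1 hnn1)
    (ae_nonneg hm2 hnn2) a b ha hb
  rw [← hindep.map_add_eq_map_conv_map hm1 hm2] at key
  simp only [map_apply (hm1.add hm2) measurableSet_Ioi] at key
  rw [← ENNReal.toReal_mul]
  exact ENNReal.toReal_mono (by finiteness) key
end

section
/- Let 0 ≤ c₁ < c₂ < 2c₁ and let X take value c₁ with probability p and value c₂ with probability 1−p, for some p ∈ [0,1]. Then X is light-everywhere: P(X > a+b) ≤ P(X > a)·P(X > b) for all a, b ≥ 0. -/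
/-!
The tail sets `{t < X}` shrink as `t` grows. If `X` takes values in `[m, M]` with `M ≤ 2m`, then
for `a + b < M` one of `a`, `b` lies below `m`, so its tail set is everything and the inequality
reduces to monotonicity of the measure; for `a + b ≥ M` the left-hand side vanishes.
-/

open MeasureTheory Set

section

variable {Ω : Type*}

lemma setOf_lt_eq_univ_of_lt {X : Ω → ℝ} {m t : ℝ} (hX : ∀ ω, m ≤ X ω) (ht : t < m) :
    {ω | t < X ω} = univ :=
  eq_univ_of_forall fun ω => ht.trans_le (hX ω)

lemma setOf_lt_eq_empty_of_le {X : Ω → ℝ} {M t : ℝ} (hX : ∀ ω, X ω ≤ M) (ht : M ≤ t) :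
    {ω | t < X ω} = ∅ :=
  eq_empty_of_forall_notMem fun ω h => (h.trans_le ((hX ω).trans ht)).false

lemma setOf_add_lt_eq_empty_or_setOf_lt_eq_univ {X : Ω → ℝ} {m M : ℝ}
    (hX : ∀ ω, X ω ∈ Icc m M) (hM : M ≤ 2 * m) (a b : ℝ) :
    {ω | a + b < X ω} = ∅ ∨ {ω | a < X ω} = univ ∨ {ω | b < X ω} = univ := by
  rcases le_or_gt M (a + b) with hab | hab
  · exact Or.inl (setOf_lt_eq_empty_of_le (fun ω => (hX ω).2) hab)
  rcases lt_or_ge a m with ha | ha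
  · exact Or.inr (Or.inl (setOf_lt_eq_univ_of_lt (fun ω => (hX ω).1) ha))
  · exact Or.inr (Or.inr (setOf_lt_eq_univ_of_lt (fun ω => (hX ω).1) (by linarith)))

variable [MeasurableSpace Ω]

lemma measureReal_le_mul_of_subset {μ : Measure Ω} [IsProbabilityMeasure μ] {A B C : Set Ω}
    (hCA : C ⊆ A) (hCB : C ⊆ B) (h : C = ∅ ∨ A = univ ∨ B = univ) :
    μ.real C ≤ μ.real A * μ.real B := by
  rcases h with rfl | rfl | rfl
  · simp only [measureReal_empty]
    positivity
  · simpa using measureReal_mono hCB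
  · simpa using measureReal_mono hCA

lemma measureReal_add_lt_le_mul_of_mem_Icc (μ : Measure Ω) [IsProbabilityMeasure μ]
    {X : Ω → ℝ} {m M : ℝ} (hX : ∀ ω, X ω ∈ Icc m M) (hM : M ≤ 2 * m)
    {a b : ℝ} (ha : 0 ≤ a) (hb : 0 ≤ b) :
    μ.real {ω | a + b < X ω} ≤ μ.real {ω | a < X ω} * μ.real {ω | b < X ω} :=
  measureReal_le_mul_of_subset
    (fun _ h => (le_add_of_nonneg_right hb).trans_lt h)
    (fun _ h => (le_add_of_nonneg_left ha).trans_lt h)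
    (setOf_add_lt_eq_empty_or_setOf_lt_eq_univ hX hM a b)

end

theorem stmt_13_general {Ω : Type*} [MeasurableSpace Ω] (μ : Measure Ω) [IsProbabilityMeasure μ]
    (c₁ c₂ : ℝ) (hlt : c₁ < c₂) (hlt2 : c₂ < 2 * c₁)
    (X : Ω → ℝ) (hsupp : ∀ ω, X ω = c₁ ∨ X ω = c₂) :
    ∀ a b : ℝ, 0 ≤ a → 0 ≤ b →
      (μ {ω | a + b < X ω}).toReal ≤
        (μ {ω | a < X ω}).toReal * (μ {ω | b < X ω}).toReal := by
  have hX : ∀ ω, X ω ∈ Icc c₁ c₂ := fun ω => by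
    rcases hsupp ω with h | h <;> rw [h]
    exacts [left_mem_Icc.2 hlt.le, right_mem_Icc.2 hlt.le]
  intro a b ha hb
  exact measureReal_add_lt_le_mul_of_mem_Icc μ hX hlt2.le ha hb

/-- A two-point random variable supported on `{c₁, c₂}` with
`0 ≤ c₁ < c₂ < 2c₁` is light-everywhere. -/
theorem stmt_13 {Ω : Type*} [MeasurableSpace Ω] (μ : Measure Ω) [IsProbabilityMeasure μ]
    (c₁ c₂ p : ℝ) (hc₁ : 0 ≤ c₁) (hlt : c₁ < c₂) (hlt2 : c₂ < 2 * c₁)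
    (hp0 : 0 ≤ p) (hp1 : p ≤ 1)
    (X : Ω → ℝ) (hsupp : ∀ ω, X ω = c₁ ∨ X ω = c₂)
    (hprob : μ {ω | X ω = c₁} = ENNReal.ofReal p) :
    ∀ a b : ℝ, 0 ≤ a → 0 ≤ b →
      (μ {ω | a + b < X ω}).toReal ≤
        (μ {ω | a < X ω}).toReal * (μ {ω | b < X ω}).toReal :=
  stmt_13_general μ c₁ c₂ hlt hlt2 X hsupp
end
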